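/- arXiv:2409.00418 — 5 statements merged into one kernel-verified Lean document; each statement's English description precedes it below -/
import Mathlib

section
/- Let S be a finite set, p a probability distribution on S with p(s) > 0 for all s, q : S → ℝ a function, and α > 0. Then the distribution ν*(s) = p(s)·exp(q(s)/α) / Σ_{s'} p(s')·exp(q(s')/α) maximizes the objective g(ν) = Σ_s ν(s)·q(s) − α·Σ_s ν(s)·(log ν(s) − log p(s)) over all probability distributions ν on S. -/
open Real Finset

lemma kl_nonneg_aux {S : Type*} [Fintype S] (μ ν : S → ℝ)
    (hμ : ∀ s, 0 < μ s) (hν : ∀ s, 0 ≤ ν s)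
    (hμ1 : ∑ s, μ s = 1) (hν1 : ∑ s, ν s = 1) :
    0 ≤ ∑ s, ν s * (Real.log (ν s) - Real.log (μ s)) := by
  have h : ∀ s : S, ν s * (Real.log (μ s) - Real.log (ν s)) ≤ μ s - ν s := by
    intro s
    rcases eq_or_lt_of_le (hν s) with h0 | h0
    · simp [← h0]; exact (hμ s).le
    · have hlog := Real.log_le_sub_one_of_pos (div_pos (hμ s) h0)
      rw [Real.log_div (hμ s).ne' h0.ne'] at hlog
      have := mul_le_mul_of_nonneg_left hlog h0.le
      have hdiv : ν s * (μ s / ν s - 1) = μ s - ν s := by field_simp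
      linarith [this, hdiv]
  have hsum : ∑ s, ν s * (Real.log (μ s) - Real.log (ν s)) ≤ ∑ s : S, (μ s - ν s) :=
    Finset.sum_le_sum (fun s _ => h s)
  have : ∑ s : S, (μ s - ν s) = 0 := by rw [Finset.sum_sub_distrib, hμ1, hν1]; ring
  have h2 : ∑ s, ν s * (Real.log (ν s) - Real.log (μ s))
      = -∑ s, ν s * (Real.log (μ s) - Real.log (ν s)) := by
    rw [← Finset.sum_neg_distrib]; congr 1; ext s; ring
  linarith [hsum, this, h2.ge, h2.le]

theorem soft_worst_attack_maximizer {S : Type*} [Fintype S] [Nonempty S]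
    (p : S → ℝ) (hp : ∀ s, 0 < p s) (hp1 : ∑ s, p s = 1)
    (q : S → ℝ) (α : ℝ) (hα : 0 < α)
    (ν : S → ℝ) (hν : ∀ s, 0 ≤ ν s) (hν1 : ∑ s, ν s = 1) :
    ∑ s, ν s * q s - α * ∑ s, ν s * (Real.log (ν s) - Real.log (p s)) ≤
      (∑ s, (p s * Real.exp (q s / α) / ∑ s', p s' * Real.exp (q s' / α)) * q s)
        - α * ∑ s, (p s * Real.exp (q s / α) / ∑ s', p s' * Real.exp (q s' / α)) *
            (Real.log (p s * Real.exp (q s / α) / ∑ s', p s' * Real.exp (q s' / α))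
              - Real.log (p s)) := by
  set Z : ℝ := ∑ s', p s' * Real.exp (q s' / α) with hZdef
  have hZ : 0 < Z :=
    Finset.sum_pos (fun s _ => mul_pos (hp s) (Real.exp_pos _)) Finset.univ_nonempty
  set μ : S → ℝ := fun s => p s * Real.exp (q s / α) / Z with hμdef
  have hμpos : ∀ s, 0 < μ s := fun s =>
    div_pos (mul_pos (hp s) (Real.exp_pos _)) hZ
  have hμ1 : ∑ s, μ s = 1 := by
    rw [← Finset.sum_div]; exact div_self hZ.ne'
  have hlogμ : ∀ s, Real.log (μ s) = Real.log (p s) + q s / α - Real.log Z := by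
    intro s
    rw [hμdef]
    rw [Real.log_div (mul_pos (hp s) (Real.exp_pos _)).ne' hZ.ne',
      Real.log_mul (hp s).ne' (Real.exp_pos _).ne', Real.log_exp]
  -- RHS equals α * log Z
  have hRHS : (∑ s, μ s * q s) - α * ∑ s, μ s * (Real.log (μ s) - Real.log (p s))
      = α * Real.log Z := by
    have : ∀ s : S, μ s * q s - α * (μ s * (Real.log (μ s) - Real.log (p s)))
        = α * Real.log Z * μ s := by
      intro s
      rw [hlogμ s]
      field_simp
      ring
    calc (∑ s, μ s * q s) - α * ∑ s, μ s * (Real.log (μ s) - Real.log (p s))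
        = ∑ s : S, (μ s * q s - α * (μ s * (Real.log (μ s) - Real.log (p s)))) := by
          rw [Finset.sum_sub_distrib, Finset.mul_sum]
      _ = ∑ s : S, α * Real.log Z * μ s := by
          exact Finset.sum_congr rfl (fun s _ => this s)
      _ = α * Real.log Z := by rw [← Finset.mul_sum, hμ1, mul_one]
  -- LHS equals α log Z - α KL(ν‖μ)
  have hLHS : (∑ s, ν s * q s) - α * ∑ s, ν s * (Real.log (ν s) - Real.log (p s))
      = α * Real.log Z - α * ∑ s, ν s * (Real.log (ν s) - Real.log (μ s)) := by
    have hterm : ∀ s : S, ν s * q s - α * (ν s * (Real.log (ν s) - Real.log (p s)))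
        = α * Real.log Z * ν s - α * (ν s * (Real.log (ν s) - Real.log (μ s))) := by
      intro s
      rw [hlogμ s]
      field_simp
      ring
    calc (∑ s, ν s * q s) - α * ∑ s, ν s * (Real.log (ν s) - Real.log (p s))
        = ∑ s : S, (ν s * q s - α * (ν s * (Real.log (ν s) - Real.log (p s)))) := by
          rw [Finset.sum_sub_distrib, Finset.mul_sum]
      _ = ∑ s : S, (α * Real.log Z * ν s - α * (ν s * (Real.log (ν s) - Real.log (μ s)))) :=
          Finset.sum_congr rfl (fun s _ => hterm s)
      _ = α * Real.log Z - α * ∑ s, ν s * (Real.log (ν s) - Real.log (μ s)) := by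
          rw [Finset.sum_sub_distrib, ← Finset.mul_sum, ← Finset.mul_sum, hν1, mul_one]
  have hKL := kl_nonneg_aux μ ν hμpos hν hμ1 hν1
  rw [hLHS, hRHS]
  nlinarith [mul_nonneg hα.le hKL]
end

section
/- Let S be a finite set, p a probability distribution on S with p(s) > 0 for all s, q : S → ℝ, and α > 0. The maximum value of g(ν) = Σ_s ν(s)·q(s) − α·Σ_s ν(s)·(log ν(s) − log p(s)) over all probability distributions ν on S equals α·log(Σ_s p(s)·exp(q(s)/α)). -/
open Real Finset

theorem soft_worst_attack_optimal_value {S : Type*} [Fintype S] [Nonempty S]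
    (p : S → ℝ) (hp : ∀ s, 0 < p s) (hp1 : ∑ s, p s = 1)
    (q : S → ℝ) (α : ℝ) (hα : 0 < α) :
    IsGreatest {x : ℝ | ∃ ν : S → ℝ, (∀ s, 0 ≤ ν s) ∧ (∑ s, ν s = 1) ∧
        x = ∑ s, ν s * q s - α * ∑ s, ν s * (Real.log (ν s) - Real.log (p s))}
      (α * Real.log (∑ s, p s * Real.exp (q s / α))) := by
  set Z : ℝ := ∑ s, p s * Real.exp (q s / α) with hZdef
  have hZpos : 0 < Z := Finset.sum_pos (fun s _ => mul_pos (hp s) (Real.exp_pos _))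
    Finset.univ_nonempty
  set w : S → ℝ := fun s => p s * Real.exp (q s / α) / Z with hwdef
  have hwpos : ∀ s, 0 < w s := fun s => div_pos (mul_pos (hp s) (Real.exp_pos _)) hZpos
  have hwsum : ∑ s, w s = 1 := by
    rw [hwdef, ← Finset.sum_div, ← hZdef, div_self hZpos.ne']
  have hlogw : ∀ s, Real.log (w s) = Real.log (p s) + q s / α - Real.log Z := by
    intro s
    rw [hwdef]
    rw [Real.log_div (mul_pos (hp s) (Real.exp_pos _)).ne' hZpos.ne',
      Real.log_mul (hp s).ne' (Real.exp_pos _).ne', Real.log_exp]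
  constructor
  · refine ⟨w, fun s => (hwpos s).le, hwsum, ?_⟩
    have : ∀ s, w s * (Real.log (w s) - Real.log (p s)) = w s * (q s / α) - w s * Real.log Z := by
      intro s; rw [hlogw s]; ring
    rw [Finset.sum_congr rfl (fun s _ => this s), Finset.sum_sub_distrib, ← Finset.sum_mul,
      hwsum]
    have : ∑ s, w s * (q s / α) = (∑ s, w s * q s) / α := by
      rw [Finset.sum_div]; congr 1; ext s; ring
    rw [this]
    field_simp
    ring
  · rintro x ⟨ν, hν0, hν1, rfl⟩
    have key : ∀ s ∈ Finset.univ, ν s * q s - α * (ν s * (Real.log (ν s) - Real.log (p s)))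
        ≤ α * (w s - ν s) + α * ν s * Real.log Z := by
      intro s _
      rcases eq_or_lt_of_le (hν0 s) with h | h
      · rw [← h]; simp
        exact mul_nonneg hα.le (hwpos s).le
      · have hlog := Real.log_le_sub_one_of_pos (div_pos (hwpos s) h)
        rw [Real.log_div (hwpos s).ne' h.ne', hlogw s, div_sub_one h.ne'] at hlog
        have := mul_le_mul_of_nonneg_left hlog (mul_pos hα h).le
        have hdiv : α * ν s * ((w s - ν s) / ν s) = α * (w s - ν s) := by
          field_simp
        rw [hdiv] at this
        have hq : α * ν s * (q s / α) = ν s * q s := by field_simp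
        nlinarith [this]
    calc ∑ s, ν s * q s - α * ∑ s, ν s * (Real.log (ν s) - Real.log (p s))
        = ∑ s, (ν s * q s - α * (ν s * (Real.log (ν s) - Real.log (p s)))) := by
          rw [Finset.sum_sub_distrib, Finset.mul_sum]
      _ ≤ ∑ s, (α * (w s - ν s) + α * ν s * Real.log Z) := Finset.sum_le_sum key
      _ = α * Real.log Z := by
          rw [Finset.sum_add_distrib]
          have h1 : ∑ s, α * (w s - ν s) = 0 := by
            rw [← Finset.mul_sum, Finset.sum_sub_distrib, hwsum, hν1]; ring
          have h2 : ∑ s, α * ν s * Real.log Z = α * Real.log Z := by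
            have : ∀ s, α * ν s * Real.log Z = ν s * (α * Real.log Z) := fun s => by ring
            rw [Finset.sum_congr rfl (fun s _ => this s), ← Finset.sum_mul, hν1, one_mul]
          rw [h1, h2, zero_add]
end

section
/- Consider the worst-case Bellman operator on bounded functions Q : S × A → ℝ over a finite MDP with discount γ ∈ [0,1), fixed policy π, transition kernel F, reward r, and perturbation sets B(s) ⊆ S: (T Q)(s,a) = r(s,a) + γ·E_{s' ∼ F(s,a)}[ min_{s̃ ∈ B(s')} E_{ã ∼ π(·|s̃)}[ Q(s', ã) ] ]. Then T is a γ-contraction in the sup norm: ‖T Q₁ − T Q₂‖_∞ ≤ γ·‖Q₁ − Q₂‖_∞. -/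
open Real Finset

lemma abs_inf'_sub_inf'_le {α : Type*} {t : Finset α} (h : t.Nonempty)
    (f g : α → ℝ) {C : ℝ} (hC : ∀ x ∈ t, |f x - g x| ≤ C) :
    |t.inf' h f - t.inf' h g| ≤ C := by
  rw [abs_sub_le_iff]
  constructor
  · obtain ⟨x, hx, hg⟩ := Finset.exists_mem_eq_inf' h g
    have h1 : t.inf' h f ≤ f x := Finset.inf'_le _ hx
    have := hC x hx
    rw [abs_sub_le_iff] at this
    linarith [h1, this.1, hg]
  · obtain ⟨x, hx, hf⟩ := Finset.exists_mem_eq_inf' h f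
    have h1 : t.inf' h g ≤ g x := Finset.inf'_le _ hx
    have := hC x hx
    rw [abs_sub_le_iff] at this
    linarith [h1, this.2, hf]

theorem worst_case_bellman_contraction {S A : Type*} [Fintype S] [Fintype A]
    [Nonempty S] [Nonempty A]
    (F : S → A → S → ℝ) (hF : ∀ s a, (∀ s', 0 ≤ F s a s') ∧ ∑ s', F s a s' = 1)
    (pol : S → A → ℝ) (hpol : ∀ st, (∀ a, 0 ≤ pol st a) ∧ ∑ a, pol st a = 1)
    (B : S → Finset S) (hB : ∀ s', (B s').Nonempty)
    (r : S → A → ℝ) (γ : ℝ) (hγ0 : 0 ≤ γ) (hγ1 : γ < 1)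
    (Q₁ Q₂ : S → A → ℝ) :
    Finset.univ.sup' Finset.univ_nonempty (fun sa : S × A =>
        |(r sa.1 sa.2 + γ * ∑ s', F sa.1 sa.2 s' *
            (B s').inf' (hB s') (fun st => ∑ b, pol st b * Q₁ s' b)) -
         (r sa.1 sa.2 + γ * ∑ s', F sa.1 sa.2 s' *
            (B s').inf' (hB s') (fun st => ∑ b, pol st b * Q₂ s' b))|) ≤
      γ * Finset.univ.sup' Finset.univ_nonempty
        (fun sa : S × A => |Q₁ sa.1 sa.2 - Q₂ sa.1 sa.2|) := by
  set M := Finset.univ.sup' Finset.univ_nonempty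
      (fun sa : S × A => |Q₁ sa.1 sa.2 - Q₂ sa.1 sa.2|) with hM
  have hMle : ∀ s a, |Q₁ s a - Q₂ s a| ≤ M := fun s a =>
    Finset.le_sup' (f := fun sa : S × A => |Q₁ sa.1 sa.2 - Q₂ sa.1 sa.2|)
      (Finset.mem_univ (s, a))
  -- inner expectation bound
  have hinner : ∀ s' st, |(∑ b, pol st b * Q₁ s' b) - ∑ b, pol st b * Q₂ s' b| ≤ M := by
    intro s' st
    rw [← Finset.sum_sub_distrib]
    calc |∑ b, (pol st b * Q₁ s' b - pol st b * Q₂ s' b)|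
        ≤ ∑ b, |pol st b * Q₁ s' b - pol st b * Q₂ s' b| := Finset.abs_sum_le_sum_abs _ _
      _ = ∑ b, pol st b * |Q₁ s' b - Q₂ s' b| := by
          apply Finset.sum_congr rfl; intro b _
          rw [← mul_sub, abs_mul, abs_of_nonneg ((hpol st).1 b)]
      _ ≤ ∑ b, pol st b * M := by
          apply Finset.sum_le_sum; intro b _
          exact mul_le_mul_of_nonneg_left (hMle s' b) ((hpol st).1 b)
      _ = M := by rw [← Finset.sum_mul, (hpol st).2, one_mul]
  have hinf : ∀ s', |(B s').inf' (hB s') (fun st => ∑ b, pol st b * Q₁ s' b) -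
      (B s').inf' (hB s') (fun st => ∑ b, pol st b * Q₂ s' b)| ≤ M := by
    intro s'
    exact abs_inf'_sub_inf'_le _ _ _ (fun st _ => hinner s' st)
  apply Finset.sup'_le
  intro sa _
  obtain ⟨s, a⟩ := sa
  simp only
  rw [add_sub_add_left_eq_sub, ← mul_sub, abs_mul, abs_of_nonneg hγ0,
    ← Finset.sum_sub_distrib]
  apply mul_le_mul_of_nonneg_left _ hγ0
  calc |∑ s', (F s a s' * (B s').inf' (hB s') (fun st => ∑ b, pol st b * Q₁ s' b) -
        F s a s' * (B s').inf' (hB s') (fun st => ∑ b, pol st b * Q₂ s' b))|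
      ≤ ∑ s', |F s a s' * (B s').inf' (hB s') (fun st => ∑ b, pol st b * Q₁ s' b) -
        F s a s' * (B s').inf' (hB s') (fun st => ∑ b, pol st b * Q₂ s' b)| :=
        Finset.abs_sum_le_sum_abs _ _
    _ ≤ ∑ s', F s a s' * M := by
        apply Finset.sum_le_sum; intro s' _
        rw [← mul_sub, abs_mul, abs_of_nonneg ((hF s a).1 s')]
        exact mul_le_mul_of_nonneg_left (hinf s') ((hF s a).1 s')
    _ = M := by rw [← Finset.sum_mul, (hF s a).2, one_mul]
end

section
/- Consider the soft-worst Bellman operator on bounded Q : S × A → ℝ over a finite MDP with discount γ ∈ [0,1), fixed policy π, prior perturbation distribution p(·|s), entropy coefficient α_ent ≥ 0 and attack temperature α_attk > 0: (T Q)(s,a) = r(s,a) + γ·E_{s' ∼ F(s,a)}[ −α_attk·log( Σ_{s̃} p(s̃|s')·exp( −V_Q(s', s̃)/α_attk ) ) ], where V_Q(s', s̃) = Σ_ã π(ã|s̃)·(Q(s', ã) − α_ent·log π(ã|s̃)). Then T is a γ-contraction in the sup norm on Q. -/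
open Real Finset

lemma lse_lip {S : Type*} [Fintype S] (pr : S → ℝ) (hpr0 : ∀ st, 0 ≤ pr st)
    (hpr1 : ∑ st, pr st = 1) (α : ℝ) (hα : 0 < α) (f g : S → ℝ) (M : ℝ)
    (h : ∀ st, f st ≤ g st + M) :
    -α * Real.log (∑ st, pr st * Real.exp (-(f st) / α)) ≤
      -α * Real.log (∑ st, pr st * Real.exp (-(g st) / α)) + M := by
  have hSg : 0 < ∑ st, pr st * Real.exp (-(g st) / α) := by
    have : ∃ st ∈ Finset.univ, 0 < pr st := by
      by_contra hc
      push_neg at hc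
      have : ∑ st, pr st = 0 := Finset.sum_eq_zero fun st _ =>
        le_antisymm (hc st (Finset.mem_univ st)) (hpr0 st)
      linarith
    obtain ⟨st, _, hst⟩ := this
    exact Finset.sum_pos' (fun i _ => mul_nonneg (hpr0 i) (Real.exp_pos _).le)
      ⟨st, Finset.mem_univ st, mul_pos hst (Real.exp_pos _)⟩
  have hSf : 0 < ∑ st, pr st * Real.exp (-(f st) / α) := by
    have : ∃ st ∈ Finset.univ, 0 < pr st := by
      by_contra hc
      push_neg at hc
      have : ∑ st, pr st = 0 := Finset.sum_eq_zero fun st _ =>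
        le_antisymm (hc st (Finset.mem_univ st)) (hpr0 st)
      linarith
    obtain ⟨st, _, hst⟩ := this
    exact Finset.sum_pos' (fun i _ => mul_nonneg (hpr0 i) (Real.exp_pos _).le)
      ⟨st, Finset.mem_univ st, mul_pos hst (Real.exp_pos _)⟩
  have hterm : ∀ st, Real.exp (-M / α) * (pr st * Real.exp (-(g st) / α)) ≤
      pr st * Real.exp (-(f st) / α) := by
    intro st
    have : Real.exp (-M / α) * Real.exp (-(g st) / α) = Real.exp (-(g st + M) / α) := by
      rw [← Real.exp_add]; ring_nf
    have h2 : Real.exp (-(g st + M) / α) ≤ Real.exp (-(f st) / α) := by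
      apply Real.exp_le_exp.2
      have := h st
      rw [div_le_div_iff_of_pos_right hα]
      linarith
    calc Real.exp (-M / α) * (pr st * Real.exp (-(g st) / α))
        = pr st * (Real.exp (-M / α) * Real.exp (-(g st) / α)) := by ring
      _ = pr st * Real.exp (-(g st + M) / α) := by rw [this]
      _ ≤ pr st * Real.exp (-(f st) / α) := by
          exact mul_le_mul_of_nonneg_left h2 (hpr0 st)
  have hsum : Real.exp (-M / α) * (∑ st, pr st * Real.exp (-(g st) / α)) ≤
      ∑ st, pr st * Real.exp (-(f st) / α) := by
    rw [Finset.mul_sum]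
    exact Finset.sum_le_sum fun st _ => hterm st
  have hlog : -M / α + Real.log (∑ st, pr st * Real.exp (-(g st) / α)) ≤
      Real.log (∑ st, pr st * Real.exp (-(f st) / α)) := by
    have := Real.log_le_log (mul_pos (Real.exp_pos _) hSg) hsum
    rwa [Real.log_mul (Real.exp_pos _).ne' hSg.ne', Real.log_exp] at this
  have := mul_le_mul_of_nonneg_left hlog hα.le
  rw [mul_add, mul_div_cancel₀ _ hα.ne'] at this
  nlinarith

theorem soft_worst_bellman_contraction {S A : Type*} [Fintype S] [Fintype A]
    [Nonempty S] [Nonempty A]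
    (F : S → A → S → ℝ) (hF : ∀ s a, (∀ s', 0 ≤ F s a s') ∧ ∑ s', F s a s' = 1)
    (pol : S → A → ℝ) (hpol : ∀ st, (∀ a, 0 < pol st a) ∧ ∑ a, pol st a = 1)
    (pr : S → S → ℝ) (hpr : ∀ s', (∀ st, 0 ≤ pr s' st) ∧ ∑ st, pr s' st = 1)
    (r : S → A → ℝ) (γ : ℝ) (hγ0 : 0 ≤ γ) (hγ1 : γ < 1)
    (αent αattk : ℝ) (hαent : 0 ≤ αent) (hαattk : 0 < αattk)
    (Q₁ Q₂ : S → A → ℝ) :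
    Finset.univ.sup' Finset.univ_nonempty (fun sa : S × A =>
        |(r sa.1 sa.2 + γ * ∑ s', F sa.1 sa.2 s' *
            (-αattk * Real.log (∑ st, pr s' st *
              Real.exp (-(∑ b, pol st b * (Q₁ s' b - αent * Real.log (pol st b))) / αattk)))) -
         (r sa.1 sa.2 + γ * ∑ s', F sa.1 sa.2 s' *
            (-αattk * Real.log (∑ st, pr s' st *
              Real.exp (-(∑ b, pol st b * (Q₂ s' b - αent * Real.log (pol st b))) / αattk))))|) ≤
      γ * Finset.univ.sup' Finset.univ_nonempty
        (fun sa : S × A => |Q₁ sa.1 sa.2 - Q₂ sa.1 sa.2|) := by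
  set M : ℝ := Finset.univ.sup' Finset.univ_nonempty
      (fun sa : S × A => |Q₁ sa.1 sa.2 - Q₂ sa.1 sa.2|) with hM
  have hMb : ∀ s b, |Q₁ s b - Q₂ s b| ≤ M := fun s b =>
    Finset.le_sup' (f := fun sa : S × A => |Q₁ sa.1 sa.2 - Q₂ sa.1 sa.2|)
      (Finset.mem_univ (s, b))
  -- V difference bound
  have hV : ∀ (s' st : S) (Q Q' : S → A → ℝ), (∀ s b, Q s b - Q' s b ≤ M) →
      (∑ b, pol st b * (Q s' b - αent * Real.log (pol st b))) ≤
      (∑ b, pol st b * (Q' s' b - αent * Real.log (pol st b))) + M := by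
    intro s' st Q Q' hb
    have h1 : (∑ b, pol st b * (Q s' b - αent * Real.log (pol st b))) -
        (∑ b, pol st b * (Q' s' b - αent * Real.log (pol st b))) =
        ∑ b, pol st b * (Q s' b - Q' s' b) := by
      rw [← Finset.sum_sub_distrib]
      congr 1; ext b; ring
    have h2 : ∑ b, pol st b * (Q s' b - Q' s' b) ≤ ∑ b, pol st b * M :=
      Finset.sum_le_sum fun b _ =>
        mul_le_mul_of_nonneg_left (hb s' b) ((hpol st).1 b).le
    rw [← Finset.sum_mul, (hpol st).2, one_mul] at h2
    linarith [h1 ▸ h2]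
  -- L bound
  have hL : ∀ s' : S, |(-αattk * Real.log (∑ st, pr s' st *
        Real.exp (-(∑ b, pol st b * (Q₁ s' b - αent * Real.log (pol st b))) / αattk))) -
      (-αattk * Real.log (∑ st, pr s' st *
        Real.exp (-(∑ b, pol st b * (Q₂ s' b - αent * Real.log (pol st b))) / αattk)))| ≤ M := by
    intro s'
    rw [abs_sub_le_iff]
    constructor
    · have := lse_lip (pr s') (hpr s').1 (hpr s').2 αattk hαattk
        (fun st => ∑ b, pol st b * (Q₁ s' b - αent * Real.log (pol st b)))
        (fun st => ∑ b, pol st b * (Q₂ s' b - αent * Real.log (pol st b))) M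
        (fun st => hV s' st Q₁ Q₂ (fun s b => (abs_le.1 (hMb s b)).2 |>.trans_eq rfl))
      linarith [this]
    · have := lse_lip (pr s') (hpr s').1 (hpr s').2 αattk hαattk
        (fun st => ∑ b, pol st b * (Q₂ s' b - αent * Real.log (pol st b)))
        (fun st => ∑ b, pol st b * (Q₁ s' b - αent * Real.log (pol st b))) M
        (fun st => hV s' st Q₂ Q₁ (fun s b => by
          have := (abs_le.1 (hMb s b)).1; linarith))
      linarith [this]
  apply Finset.sup'_le
  intro sa _
  obtain ⟨s, a⟩ := sa
  simp only
  have hsum : |(∑ s', F s a s' *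
        (-αattk * Real.log (∑ st, pr s' st *
          Real.exp (-(∑ b, pol st b * (Q₁ s' b - αent * Real.log (pol st b))) / αattk)))) -
      (∑ s', F s a s' *
        (-αattk * Real.log (∑ st, pr s' st *
          Real.exp (-(∑ b, pol st b * (Q₂ s' b - αent * Real.log (pol st b))) / αattk))))| ≤ M := by
    rw [← Finset.sum_sub_distrib]
    calc |∑ s', (F s a s' *
          (-αattk * Real.log (∑ st, pr s' st *
            Real.exp (-(∑ b, pol st b * (Q₁ s' b - αent * Real.log (pol st b))) / αattk))) -
          F s a s' *
          (-αattk * Real.log (∑ st, pr s' st *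
            Real.exp (-(∑ b, pol st b * (Q₂ s' b - αent * Real.log (pol st b))) / αattk))))|
        ≤ ∑ s', |F s a s' *
          (-αattk * Real.log (∑ st, pr s' st *
            Real.exp (-(∑ b, pol st b * (Q₁ s' b - αent * Real.log (pol st b))) / αattk))) -
          F s a s' *
          (-αattk * Real.log (∑ st, pr s' st *
            Real.exp (-(∑ b, pol st b * (Q₂ s' b - αent * Real.log (pol st b))) / αattk)))| :=
          Finset.abs_sum_le_sum_abs _ _
      _ ≤ ∑ s', F s a s' * M := by
          apply Finset.sum_le_sum
          intro s' _
          rw [← mul_sub, abs_mul, abs_of_nonneg ((hF s a).1 s')]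
          exact mul_le_mul_of_nonneg_left (hL s') ((hF s a).1 s')
      _ = M := by rw [← Finset.sum_mul, (hF s a).2, one_mul]
  have key : |(r s a + γ * ∑ s', F s a s' *
        (-αattk * Real.log (∑ st, pr s' st *
          Real.exp (-(∑ b, pol st b * (Q₁ s' b - αent * Real.log (pol st b))) / αattk)))) -
      (r s a + γ * ∑ s', F s a s' *
        (-αattk * Real.log (∑ st, pr s' st *
          Real.exp (-(∑ b, pol st b * (Q₂ s' b - αent * Real.log (pol st b))) / αattk))))| ≤
      γ * M := by
    have : (r s a + γ * ∑ s', F s a s' *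
          (-αattk * Real.log (∑ st, pr s' st *
            Real.exp (-(∑ b, pol st b * (Q₁ s' b - αent * Real.log (pol st b))) / αattk)))) -
        (r s a + γ * ∑ s', F s a s' *
          (-αattk * Real.log (∑ st, pr s' st *
            Real.exp (-(∑ b, pol st b * (Q₂ s' b - αent * Real.log (pol st b))) / αattk)))) =
        γ * ((∑ s', F s a s' *
          (-αattk * Real.log (∑ st, pr s' st *
            Real.exp (-(∑ b, pol st b * (Q₁ s' b - αent * Real.log (pol st b))) / αattk)))) -
        (∑ s', F s a s' *
          (-αattk * Real.log (∑ st, pr s' st *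
            Real.exp (-(∑ b, pol st b * (Q₂ s' b - αent * Real.log (pol st b))) / αattk))))) := by
      ring
    rw [this, abs_mul, abs_of_nonneg hγ0]
    exact mul_le_mul_of_nonneg_left hsum hγ0
  exact key
end

section
/- Consider the epsilon-worst Bellman operator on bounded Q : S × A → ℝ over a finite MDP with discount γ ∈ [0,1), fixed policy π, mixing weight κ ∈ [0,1], prior distribution p(·|s'), and perturbation sets B(s') ⊆ S: (T Q)(s,a) = r(s,a) + γ·E_{s' ∼ F(s,a)}[ κ·min_{s̃ ∈ B(s')} V_Q(s', s̃) + (1−κ)·E_{s̃ ∼ p(·|s')}[V_Q(s', s̃)] ], where V_Q(s', s̃) = E_{ã ∼ π(·|s̃)}[Q(s', ã) − α_ent·log π(ã|s̃)]. Then T is a γ-contraction in the sup norm. -/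
open Real Finset

theorem epsilon_worst_bellman_contraction {S A : Type*} [Fintype S] [Fintype A]
    [Nonempty S] [Nonempty A]
    (F : S → A → S → ℝ) (hF : ∀ s a, (∀ s', 0 ≤ F s a s') ∧ ∑ s', F s a s' = 1)
    (pol : S → A → ℝ) (hpol : ∀ st, (∀ a, 0 < pol st a) ∧ ∑ a, pol st a = 1)
    (pr : S → S → ℝ) (hpr : ∀ s', (∀ st, 0 ≤ pr s' st) ∧ ∑ st, pr s' st = 1)
    (B : S → Finset S) (hB : ∀ s', (B s').Nonempty)
    (r : S → A → ℝ) (γ : ℝ) (hγ0 : 0 ≤ γ) (hγ1 : γ < 1)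
    (κ : ℝ) (hκ0 : 0 ≤ κ) (hκ1 : κ ≤ 1) (αent : ℝ) (hαent : 0 ≤ αent)
    (Q₁ Q₂ : S → A → ℝ) :
    Finset.univ.sup' Finset.univ_nonempty (fun sa : S × A =>
        |(r sa.1 sa.2 + γ * ∑ s', F sa.1 sa.2 s' *
            (κ * (B s').inf' (hB s')
                (fun st => ∑ b, pol st b * (Q₁ s' b - αent * Real.log (pol st b))) +
             (1 - κ) * ∑ st, pr s' st *
                ∑ b, pol st b * (Q₁ s' b - αent * Real.log (pol st b)))) -
         (r sa.1 sa.2 + γ * ∑ s', F sa.1 sa.2 s' *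
            (κ * (B s').inf' (hB s')
                (fun st => ∑ b, pol st b * (Q₂ s' b - αent * Real.log (pol st b))) +
             (1 - κ) * ∑ st, pr s' st *
                ∑ b, pol st b * (Q₂ s' b - αent * Real.log (pol st b))))|) ≤
      γ * Finset.univ.sup' Finset.univ_nonempty
        (fun sa : S × A => |Q₁ sa.1 sa.2 - Q₂ sa.1 sa.2|) := by
  set M := Finset.univ.sup' Finset.univ_nonempty
      (fun sa : S × A => |Q₁ sa.1 sa.2 - Q₂ sa.1 sa.2|) with hMdef
  have hQ : ∀ s b, |Q₁ s b - Q₂ s b| ≤ M := fun s b =>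
    Finset.le_sup' (fun sa : S × A => |Q₁ sa.1 sa.2 - Q₂ sa.1 sa.2|) (Finset.mem_univ (s, b))
  -- value function difference bound
  set V₁ : S → S → ℝ := fun s' st => ∑ b, pol st b * (Q₁ s' b - αent * Real.log (pol st b))
    with hV₁def
  set V₂ : S → S → ℝ := fun s' st => ∑ b, pol st b * (Q₂ s' b - αent * Real.log (pol st b))
    with hV₂def
  have hV : ∀ s' st, |V₁ s' st - V₂ s' st| ≤ M := by
    intro s' st
    have heq : V₁ s' st - V₂ s' st = ∑ b, pol st b * (Q₁ s' b - Q₂ s' b) := by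
      simp only [hV₁def, hV₂def, ← Finset.sum_sub_distrib]
      exact Finset.sum_congr rfl (fun b _ => by ring)
    rw [heq]
    calc |∑ b, pol st b * (Q₁ s' b - Q₂ s' b)| ≤ ∑ b, |pol st b * (Q₁ s' b - Q₂ s' b)| :=
          Finset.abs_sum_le_sum_abs _ _
      _ ≤ ∑ b, pol st b * M := by
          refine Finset.sum_le_sum (fun b _ => ?_)
          rw [abs_mul, abs_of_pos ((hpol st).1 b)]
          exact mul_le_mul_of_nonneg_left (hQ s' b) ((hpol st).1 b).le
      _ = M := by rw [← Finset.sum_mul, (hpol st).2, one_mul]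
  -- inf difference bound
  have key : ∀ (f g : S → ℝ) (s' : S), (∀ st, f st - g st ≤ M) →
      (B s').inf' (hB s') f - (B s').inf' (hB s') g ≤ M := by
    intro f g s' h
    obtain ⟨st₀, hst₀, hgeq⟩ := Finset.exists_mem_eq_inf' (hB s') g
    calc (B s').inf' (hB s') f - (B s').inf' (hB s') g ≤ f st₀ - g st₀ := by
          rw [hgeq]; exact sub_le_sub_right (Finset.inf'_le _ hst₀) _
      _ ≤ M := h st₀
  have hInf : ∀ s', |(B s').inf' (hB s') (V₁ s') - (B s').inf' (hB s') (V₂ s')| ≤ M := by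
    intro s'
    rw [abs_sub_le_iff]
    constructor
    · exact key _ _ s' (fun st => (abs_le.mp (hV s' st)).2.trans_eq' (by ring_nf))
    · refine key _ _ s' (fun st => ?_)
      have := (abs_le.mp (hV s' st)).1
      linarith
  -- expectation over prior difference bound
  have hPr : ∀ s', |(∑ st, pr s' st * V₁ s' st) - (∑ st, pr s' st * V₂ s' st)| ≤ M := by
    intro s'
    rw [← Finset.sum_sub_distrib]
    calc |∑ st, (pr s' st * V₁ s' st - pr s' st * V₂ s' st)|
        ≤ ∑ st, |pr s' st * V₁ s' st - pr s' st * V₂ s' st| := Finset.abs_sum_le_sum_abs _ _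
      _ ≤ ∑ st, pr s' st * M := by
          refine Finset.sum_le_sum (fun st _ => ?_)
          rw [← mul_sub, abs_mul, abs_of_nonneg ((hpr s').1 st)]
          exact mul_le_mul_of_nonneg_left (hV s' st) ((hpr s').1 st)
      _ = M := by rw [← Finset.sum_mul, (hpr s').2, one_mul]
  -- inner term bound
  have hInner : ∀ s',
      |(κ * (B s').inf' (hB s') (V₁ s') + (1 - κ) * ∑ st, pr s' st * V₁ s' st) -
       (κ * (B s').inf' (hB s') (V₂ s') + (1 - κ) * ∑ st, pr s' st * V₂ s' st)| ≤ M := by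
    intro s'
    have h1 : (κ * (B s').inf' (hB s') (V₁ s') + (1 - κ) * ∑ st, pr s' st * V₁ s' st) -
       (κ * (B s').inf' (hB s') (V₂ s') + (1 - κ) * ∑ st, pr s' st * V₂ s' st)
       = κ * ((B s').inf' (hB s') (V₁ s') - (B s').inf' (hB s') (V₂ s'))
         + (1 - κ) * ((∑ st, pr s' st * V₁ s' st) - ∑ st, pr s' st * V₂ s' st) := by ring
    rw [h1]
    calc _ ≤ |κ * ((B s').inf' (hB s') (V₁ s') - (B s').inf' (hB s') (V₂ s'))|
            + |(1 - κ) * ((∑ st, pr s' st * V₁ s' st) - ∑ st, pr s' st * V₂ s' st)| :=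
        abs_add_le _ _
      _ ≤ κ * M + (1 - κ) * M := by
          rw [abs_mul, abs_mul, abs_of_nonneg hκ0, abs_of_nonneg (by linarith : (0:ℝ) ≤ 1 - κ)]
          exact add_le_add (mul_le_mul_of_nonneg_left (hInf s') hκ0)
            (mul_le_mul_of_nonneg_left (hPr s') (by linarith))
      _ = M := by ring
  refine Finset.sup'_le _ _ (fun sa _ => ?_)
  obtain ⟨s, a⟩ := sa
  simp only
  have heq : (r s a + γ * ∑ s', F s a s' *
        (κ * (B s').inf' (hB s') (V₁ s') + (1 - κ) * ∑ st, pr s' st * V₁ s' st)) -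
      (r s a + γ * ∑ s', F s a s' *
        (κ * (B s').inf' (hB s') (V₂ s') + (1 - κ) * ∑ st, pr s' st * V₂ s' st))
      = γ * ∑ s', F s a s' *
        ((κ * (B s').inf' (hB s') (V₁ s') + (1 - κ) * ∑ st, pr s' st * V₁ s' st) -
         (κ * (B s').inf' (hB s') (V₂ s') + (1 - κ) * ∑ st, pr s' st * V₂ s' st)) := by
    have hsum : (∑ s', F s a s' *
          ((κ * (B s').inf' (hB s') (V₁ s') + (1 - κ) * ∑ st, pr s' st * V₁ s' st) -
           (κ * (B s').inf' (hB s') (V₂ s') + (1 - κ) * ∑ st, pr s' st * V₂ s' st)))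
        = (∑ s', F s a s' *
            (κ * (B s').inf' (hB s') (V₁ s') + (1 - κ) * ∑ st, pr s' st * V₁ s' st))
          - ∑ s', F s a s' *
            (κ * (B s').inf' (hB s') (V₂ s') + (1 - κ) * ∑ st, pr s' st * V₂ s' st) := by
      rw [← Finset.sum_sub_distrib]
      exact Finset.sum_congr rfl (fun s' _ => by ring)
    rw [hsum]; ring
  rw [heq, abs_mul, abs_of_nonneg hγ0]
  refine mul_le_mul_of_nonneg_left ?_ hγ0
  calc |∑ s', F s a s' * _| ≤ ∑ s', |F s a s' *
        ((κ * (B s').inf' (hB s') (V₁ s') + (1 - κ) * ∑ st, pr s' st * V₁ s' st) -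
         (κ * (B s').inf' (hB s') (V₂ s') + (1 - κ) * ∑ st, pr s' st * V₂ s' st))| :=
      Finset.abs_sum_le_sum_abs _ _
    _ ≤ ∑ s', F s a s' * M := by
        refine Finset.sum_le_sum (fun s' _ => ?_)
        rw [abs_mul, abs_of_nonneg ((hF s a).1 s')]
        exact mul_le_mul_of_nonneg_left (hInner s') ((hF s a).1 s')
    _ = M := by rw [← Finset.sum_mul, (hF s a).2, one_mul]
end
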